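/- arXiv:1909.07298 — 7 statements merged into one kernel-verified Lean document; each statement's English description precedes it below -/
import Mathlib

section
/- For every integer d ≥ 4 and reals μ > 0, C > 0, E, the effective potential V_eff(r) := (C/r²)(1 − μ r^(3−d)) − E² is strictly increasing on the interval (0, r_P] and strictly decreasing on [r_P, ∞), where r_P := (μ(d−1)/2)^(1/(d−3)); consequently r_P is the unique critical point of V_eff on (0,∞) and V_eff attains its strict global maximum over (0,∞) at r = r_P. -/
/-!
The derivative of `V_eff` factors as `2 C r^(-d) (r_P^(d-3) - r^(d-3))`. Since `t ↦ t^(d-3)` is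
strictly increasing on `[0, ∞)`, the derivative is positive before `r_P`, negative after it and
vanishes only at `r_P`; the mean value theorem turns this sign pattern into the monotonicity
statements, and these give the strict maximum.
-/

open Real Set

section Unimodal

variable {f f' : ℝ → ℝ}

theorem strictMonoOn_of_hasDerivAt_pos {D : Set ℝ} (hD : Convex ℝ D)
    (hf : ∀ x ∈ D, HasDerivAt f (f' x) x) (hf' : ∀ x ∈ interior D, 0 < f' x) :
    StrictMonoOn f D :=
  strictMonoOn_of_hasDerivWithinAt_pos hD (fun x hx ↦ (hf x hx).continuousAt.continuousWithinAt)
    (fun x hx ↦ (hf x (interior_subset hx)).hasDerivWithinAt) hf'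

theorem strictAntiOn_of_hasDerivAt_neg {D : Set ℝ} (hD : Convex ℝ D)
    (hf : ∀ x ∈ D, HasDerivAt f (f' x) x) (hf' : ∀ x ∈ interior D, f' x < 0) :
    StrictAntiOn f D :=
  strictAntiOn_of_hasDerivWithinAt_neg hD (fun x hx ↦ (hf x hx).continuousAt.continuousWithinAt)
    (fun x hx ↦ (hf x (interior_subset hx)).hasDerivWithinAt) hf'

theorem lt_of_strictMonoOn_Ioc_of_strictAntiOn_Ici {a b x : ℝ} (hab : a < b)
    (hmono : StrictMonoOn f (Ioc a b)) (hanti : StrictAntiOn f (Ici b))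
    (hx : a < x) (hxb : x ≠ b) : f x < f b := by
  rcases hxb.lt_or_gt with hlt | hgt
  · exact hmono ⟨hx, hlt.le⟩ ⟨hab, le_rfl⟩ hlt
  · exact hanti self_mem_Ici hgt.le hgt

end Unimodal

theorem effective_potential_eq_sub_rpow {D μ C E x : ℝ} (hx : 0 < x) :
    C / x ^ 2 * (1 - μ * x ^ (3 - D)) - E ^ 2 = C * x ^ (-2 : ℝ) - C * μ * x ^ (1 - D) - E ^ 2 := by
  have hinv : x ^ (-2 : ℝ) = (x ^ 2)⁻¹ := by
    rw [rpow_neg hx.le, rpow_two]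
  have hsplit : x ^ (1 - D) = x ^ (-2 : ℝ) * x ^ (3 - D) := by
    rw [← rpow_add hx]; ring_nf
  rw [hsplit, hinv]
  ring

theorem hasDerivAt_effective_potential {D μ C E r : ℝ} (hr : 0 < r) :
    HasDerivAt (fun x ↦ C / x ^ 2 * (1 - μ * x ^ (3 - D)) - E ^ 2)
      (2 * C * r ^ (-D) * (μ * (D - 1) / 2 - r ^ (D - 3))) r := by
  have hpow : ∀ p : ℝ, HasDerivAt (fun x ↦ x ^ p) (p * r ^ (p - 1)) r :=
    fun p ↦ hasDerivAt_rpow_const (Or.inl hr.ne')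
  have hsum := (((hpow (-2)).const_mul C).sub ((hpow (1 - D)).const_mul (C * μ))).sub_const (E ^ 2)
  have hlocal : (fun x ↦ C * x ^ (-2 : ℝ) - C * μ * x ^ (1 - D) - E ^ 2)
      =ᶠ[nhds r] fun x ↦ C / x ^ 2 * (1 - μ * x ^ (3 - D)) - E ^ 2 := by
    filter_upwards [Ioi_mem_nhds hr] with x hx
    exact (effective_potential_eq_sub_rpow hx).symm
  refine (hsum.congr_of_eventuallyEq hlocal.symm).congr_deriv ?_
  have hsplit : r ^ (-2 - 1 : ℝ) = r ^ (-D) * r ^ (D - 3) := by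
    rw [← rpow_add hr]; ring_nf
  rw [hsplit, show 1 - D - 1 = -D by ring]
  ring

/-- For every integer `d ≥ 4` and reals `μ > 0`, `C > 0`, `E`, the effective potential
`V_eff(r) = (C/r²)(1 − μ r^(3−d)) − E²` is strictly increasing on `(0, r_P]` and strictly
decreasing on `[r_P, ∞)`, where `r_P = (μ(d−1)/2)^(1/(d−3))`; consequently `r_P` is the
unique critical point of `V_eff` on `(0,∞)` and `V_eff` attains its strict global maximum
over `(0,∞)` at `r = r_P`. -/
theorem effective_potential_monotonicity (d : ℕ) (hd : 4 ≤ d) (μ C E : ℝ)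
    (hμ : 0 < μ) (hC : 0 < C)
    (Veff : ℝ → ℝ)
    (hV : ∀ r : ℝ, Veff r = (C / r ^ 2) * (1 - μ * r ^ ((3 : ℝ) - d)) - E ^ 2)
    (rP : ℝ) (hrP : rP = (μ * ((d : ℝ) - 1) / 2) ^ ((1 : ℝ) / ((d : ℝ) - 3))) :
    StrictMonoOn Veff (Set.Ioc 0 rP) ∧
    StrictAntiOn Veff (Set.Ici rP) ∧
    (∀ r : ℝ, 0 < r → (deriv Veff r = 0 ↔ r = rP)) ∧
    (∀ r : ℝ, 0 < r → r ≠ rP → Veff r < Veff rP) := by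
  have hd3 : (0 : ℝ) < d - 3 := by
    have : (4 : ℝ) ≤ d := by exact_mod_cast hd
    linarith
  have hA : 0 < μ * ((d : ℝ) - 1) / 2 := div_pos (mul_pos hμ (by linarith)) two_pos
  have hrP_pos : 0 < rP := hrP ▸ rpow_pos_of_pos hA _
  have hrP_pow : rP ^ ((d : ℝ) - 3) = μ * ((d : ℝ) - 1) / 2 := by
    rw [hrP, one_div, rpow_inv_rpow hA.le hd3.ne']
  have hscale : ∀ r, 0 < r → 0 < 2 * C * r ^ (-(d : ℝ)) := fun r hr ↦ by positivity
  have hderiv : ∀ r, 0 < r →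
      HasDerivAt Veff (2 * C * r ^ (-(d : ℝ)) * (rP ^ ((d : ℝ) - 3) - r ^ ((d : ℝ) - 3))) r := by
    intro r hr
    rw [funext hV, hrP_pow]
    exact hasDerivAt_effective_potential hr
  have hmono : StrictMonoOn Veff (Ioc 0 rP) := by
    refine strictMonoOn_of_hasDerivAt_pos (convex_Ioc 0 rP) (fun x hx ↦ hderiv x hx.1) ?_
    rw [interior_Ioc]
    exact fun x hx ↦ mul_pos (hscale x hx.1) (sub_pos.2 (rpow_lt_rpow hx.1.le hx.2 hd3))
  have hanti : StrictAntiOn Veff (Ici rP) := by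
    refine strictAntiOn_of_hasDerivAt_neg (convex_Ici rP)
      (fun x hx ↦ hderiv x (hrP_pos.trans_le hx)) ?_
    rw [interior_Ici]
    exact fun x hx ↦ mul_neg_of_pos_of_neg (hscale x (hrP_pos.trans hx))
      (sub_neg.2 (rpow_lt_rpow hrP_pos.le hx hd3))
  refine ⟨hmono, hanti, fun r hr ↦ ?_,
    fun r hr ↦ lt_of_strictMonoOn_Ioc_of_strictAntiOn_Ici hrP_pos hmono hanti hr⟩
  rw [(hderiv r hr).deriv, mul_eq_zero, or_iff_right (hscale r hr).ne', sub_eq_zero,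
    rpow_left_inj hrP_pos.le hr.le hd3.ne', eq_comm]
end

section
/- Fix an integer d ≥ 4 and reals μ > 0, C > 0, E. If r₁ and r₂ are reals with r_H < r₁ < r₂ and V_eff(r₁) = V_eff(r₂) = 0, where r_H := μ^(1/(d−3)) and V_eff(r) := (C/r²)(1 − μ r^(3−d)) − E², then r₁ < r_P < r₂ and V_eff(r_P) > 0 (equivalently, R(r_P) < 0 where R(r) := −r⁴ V_eff(r)), with r_P := (μ(d−1)/2)^(1/(d−3)). -/
/-!
For `r > 0`, `V_eff + E²` is the function `C / r² - C μ / r^(m+2)` with `m = d - 3`, whose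
derivative `C (μ (m+2) - 2 rᵐ) / r^(m+3)` vanishes on `r > 0` only at `r_P`, where
`r_Pᵐ = μ (d-1)/2`. So `V_eff` increases strictly up to `r_P` and decreases strictly after it,
and two distinct zeros must lie on opposite sides of its maximum `V_eff(r_P) > 0`.
-/

open Set

section Unimodal

variable {α β : Type*} [LinearOrder α] [LinearOrder β]

theorem lt_and_lt_and_lt_of_strictMonoOn_of_strictAntiOn {f : α → β} {a b p : α}
    (hmono : StrictMonoOn f (Icc a p)) (hanti : StrictAntiOn f (Icc p b))
    (hab : a < b) (hf : f a = f b) : a < p ∧ p < b ∧ f a < f p := by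
  have hap : a < p := by
    by_contra! hpa
    exact (hanti ⟨hpa, hab.le⟩ ⟨hpa.trans hab.le, le_rfl⟩ hab).ne' hf
  have hpb : p < b := by
    by_contra! hbp
    exact (hmono ⟨le_rfl, hab.le.trans hbp⟩ ⟨hab.le, hbp⟩ hab).ne hf
  exact ⟨hap, hpb, hmono ⟨le_rfl, hap.le⟩ ⟨hap.le, le_rfl⟩ hap⟩

end Unimodal

/-- `V_eff + E²` for `d = m + 3`. -/
noncomputable def barrier (C μ : ℝ) (m : ℕ) (r : ℝ) : ℝ := C / r ^ 2 - C * μ / r ^ (m + 2)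

section Barrier

variable {C μ : ℝ} {m : ℕ}

theorem hasDerivAt_barrier {r : ℝ} (hr : r ≠ 0) :
    HasDerivAt (barrier C μ m) (C * (μ * (m + 2) - 2 * r ^ m) / r ^ (m + 3)) r := by
  have h := (((hasDerivAt_pow 2 r).fun_inv (pow_ne_zero 2 hr)).const_mul C).fun_sub
    (((hasDerivAt_pow (m + 2) r).fun_inv (pow_ne_zero (m + 2) hr)).const_mul (C * μ))
  have hfun : barrier C μ m = fun x ↦ C * (x ^ 2)⁻¹ - C * μ * (x ^ (m + 2))⁻¹ := by
    funext x
    simp only [barrier, div_eq_mul_inv]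
  rw [hfun]
  refine h.congr_deriv ?_
  push_cast
  field_simp
  ring

variable {p : ℝ} (hm : m ≠ 0) (hC : 0 < C) (hp : p ^ m = μ * (m + 2) / 2)
include hm hC hp

theorem strictMonoOn_barrier : StrictMonoOn (barrier C μ m) (Ioc 0 p) := by
  refine strictMonoOn_of_deriv_pos (convex_Ioc 0 p)
    (fun x hx ↦ (hasDerivAt_barrier hx.1.ne').continuousAt.continuousWithinAt) ?_
  rw [interior_Ioc]
  rintro x ⟨hx₀, hxp⟩
  rw [(hasDerivAt_barrier hx₀.ne').deriv]
  have hxpm : x ^ m < p ^ m := pow_lt_pow_left₀ hxp hx₀.le hm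
  exact div_pos (mul_pos hC (by linarith)) (by positivity)

theorem strictAntiOn_barrier (hp₀ : 0 < p) : StrictAntiOn (barrier C μ m) (Ici p) := by
  refine strictAntiOn_of_deriv_neg (convex_Ici p)
    (fun x hx ↦ (hasDerivAt_barrier (hp₀.trans_le hx).ne').continuousAt.continuousWithinAt) ?_
  rw [interior_Ici]
  intro x hx
  have hx₀ := hp₀.trans hx
  rw [(hasDerivAt_barrier hx₀.ne').deriv]
  have hpx : p ^ m < x ^ m := pow_lt_pow_left₀ hx hp₀.le hm
  exact div_neg_of_neg_of_pos (mul_neg_of_pos_of_neg hC (by linarith)) (by positivity)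

end Barrier

theorem barrier_eq_rpow {C μ r : ℝ} {m : ℕ} (hr : 0 < r) :
    barrier C μ m r = C / r ^ 2 * (1 - μ * r ^ ((3 : ℝ) - (m + 3 : ℕ))) := by
  have hpow : r ^ ((3 : ℝ) - (m + 3 : ℕ)) = (r ^ m)⁻¹ := by
    rw [show (3 : ℝ) - (m + 3 : ℕ) = -(m : ℝ) by push_cast; ring, Real.rpow_neg hr.le,
      Real.rpow_natCast]
  rw [hpow, barrier]
  field_simp
  ring

theorem rpow_one_div_sub_three_pow {μ : ℝ} {m : ℕ} (hm : m ≠ 0) (hμ : 0 ≤ μ) :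
    ((μ * (((m + 3 : ℕ) : ℝ) - 1) / 2) ^ ((1 : ℝ) / ((m + 3 : ℕ) - 3))) ^ m
      = μ * (m + 2) / 2 := by
  rw [show ((m + 3 : ℕ) : ℝ) - 3 = m by push_cast; ring,
    show ((m + 3 : ℕ) : ℝ) - 1 = m + 2 by push_cast; ring, one_div]
  exact Real.rpow_inv_natCast_pow (by positivity) hm

/-- Fix an integer `d ≥ 4` and reals `μ > 0`, `C > 0`, `E`. If `r₁` and `r₂` are reals with
`r_H < r₁ < r₂` and `V_eff(r₁) = V_eff(r₂) = 0`, then `r₁ < r_P < r₂` and `V_eff(r_P) > 0`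
(equivalently, `R(r_P) < 0` where `R(r) = −r⁴ V_eff(r)`). -/
theorem two_zeros_straddle_photon_sphere (d : ℕ) (hd : 4 ≤ d) (μ C E : ℝ)
    (hμ : 0 < μ) (hC : 0 < C)
    (Veff : ℝ → ℝ)
    (hV : ∀ r : ℝ, Veff r = (C / r ^ 2) * (1 - μ * r ^ ((3 : ℝ) - d)) - E ^ 2)
    (rH : ℝ) (hrH : rH = μ ^ ((1 : ℝ) / ((d : ℝ) - 3)))
    (rP : ℝ) (hrP : rP = (μ * ((d : ℝ) - 1) / 2) ^ ((1 : ℝ) / ((d : ℝ) - 3)))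
    (r₁ r₂ : ℝ) (h₁ : rH < r₁) (h₁₂ : r₁ < r₂)
    (hz₁ : Veff r₁ = 0) (hz₂ : Veff r₂ = 0) :
    r₁ < rP ∧ rP < r₂ ∧ 0 < Veff rP ∧ -(rP ^ 4 * Veff rP) < 0 := by
  obtain ⟨m, rfl⟩ : ∃ m : ℕ, d = m + 3 := ⟨d - 3, by omega⟩
  have hm : m ≠ 0 := by omega
  have hP₀ : 0 < rP := hrP ▸ Real.rpow_pos_of_pos (by push_cast; ring_nf; positivity) _
  have hPm : rP ^ m = μ * (m + 2) / 2 := hrP ▸ rpow_one_div_sub_three_pow hm hμ.le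
  have h₁₀ : 0 < r₁ := (hrH ▸ Real.rpow_pos_of_pos hμ _).trans h₁
  have hVb : ∀ r, 0 < r → Veff r = barrier C μ m r - E ^ 2 := fun r hr ↦ by
    rw [hV, ← barrier_eq_rpow hr]
  obtain ⟨h₁P, hP₂, hlt⟩ := lt_and_lt_and_lt_of_strictMonoOn_of_strictAntiOn
    ((strictMonoOn_barrier hm hC hPm).mono fun r hr ↦ ⟨h₁₀.trans_le hr.1, hr.2⟩)
    ((strictAntiOn_barrier hm hC hPm hP₀).mono fun r hr ↦ hr.1) h₁₂
    (by linarith [hVb r₁ h₁₀, hVb r₂ (h₁₀.trans h₁₂)])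
  have hVP : 0 < Veff rP := by linarith [hVb rP hP₀, hVb r₁ h₁₀]
  exact ⟨h₁P, hP₂, hVP, neg_neg_of_pos (by positivity)⟩
end

section
/- Fix an integer d ≥ 4 and reals μ > 0, C > 0, E with E ≠ 0. If V_eff(r_P) > 0, where V_eff(r) := (C/r²)(1 − μ r^(3−d)) − E² and r_P := (μ(d−1)/2)^(1/(d−3)), then there exist reals r₁ and r₂ with r_H < r₁ < r_P < r₂ (r_H := μ^(1/(d−3))) such that V_eff(r₁) = 0 and V_eff(r₂) = 0. -/
/-!
Write `a = d - 3`. The factor `1 - μ r⁻ᵃ` vanishes at `r_H = μ^(1/a)`, so `V_eff(r_H) = -E² < 0`,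
and `V_eff(r) → -E² < 0` as `r → ∞`. Since `r_H < r_P` and `V_eff(r_P) > 0`, the intermediate
value theorem on `[r_H, r_P]` and on `[r_P, R]` for some large `R` gives the two zeros.
-/

open Set Filter Topology

noncomputable def effPotential (μ C E a r : ℝ) : ℝ :=
  C / r ^ 2 * (1 - μ * r ^ (-a)) - E ^ 2

section effPotential

variable {μ C E a : ℝ}

theorem effPotential_horizon (hμ : 0 < μ) (ha : a ≠ 0) :
    effPotential μ C E a (μ ^ (1 / a)) = -E ^ 2 := by
  rw [effPotential, Real.rpow_neg (Real.rpow_nonneg hμ.le _), one_div,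
    Real.rpow_inv_rpow hμ.le ha, mul_inv_cancel₀ hμ.ne']
  ring

theorem continuousOn_effPotential : ContinuousOn (effPotential μ C E a) (Ioi 0) := by
  intro r (hr : 0 < r)
  have : ContinuousAt (fun r : ℝ => r ^ (-a)) r := Real.continuousAt_rpow_const r _ (.inl hr.ne')
  unfold effPotential
  exact (((continuousAt_const.div (continuousAt_id.pow 2) (pow_ne_zero 2 hr.ne')).mul
    (continuousAt_const.sub (continuousAt_const.mul this))).sub continuousAt_const).continuousWithinAt

theorem tendsto_effPotential_atTop (ha : 0 < a) :
    Tendsto (effPotential μ C E a) atTop (𝓝 (-E ^ 2)) := by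
  have hinvsq : Tendsto (fun r : ℝ => C / r ^ 2) atTop (𝓝 0) :=
    tendsto_const_nhds.div_atTop (tendsto_pow_atTop two_ne_zero)
  have hfactor : Tendsto (fun r : ℝ => 1 - μ * r ^ (-a)) atTop (𝓝 (1 - μ * 0)) :=
    tendsto_const_nhds.sub (tendsto_const_nhds.mul (tendsto_rpow_neg_atTop ha))
  have := (hinvsq.mul hfactor).sub_const (E ^ 2)
  rwa [mul_zero, sub_zero, mul_one, zero_sub] at this

end effPotential

theorem exists_two_zeros_of_pos_max_general (d : ℕ) (hd : 4 ≤ d) (μ C E : ℝ)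
    (hμ : 0 < μ) (hE : E ≠ 0)
    (Veff : ℝ → ℝ)
    (hV : ∀ r : ℝ, Veff r = (C / r ^ 2) * (1 - μ * r ^ ((3 : ℝ) - d)) - E ^ 2)
    (rH : ℝ) (hrH : rH = μ ^ ((1 : ℝ) / ((d : ℝ) - 3)))
    (rP : ℝ) (hrP : rP = (μ * ((d : ℝ) - 1) / 2) ^ ((1 : ℝ) / ((d : ℝ) - 3)))
    (hpos : 0 < Veff rP) :
    ∃ r₁ r₂ : ℝ, rH < r₁ ∧ r₁ < rP ∧ rP < r₂ ∧ Veff r₁ = 0 ∧ Veff r₂ = 0 := by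
  have hd' : (4 : ℝ) ≤ d := by exact_mod_cast hd
  have ha : (0 : ℝ) < d - 3 := by linarith
  obtain rfl : Veff = effPotential μ C E (d - 3) :=
    funext fun r => by rw [hV, effPotential, neg_sub]
  have hneg : -E ^ 2 < 0 := neg_neg_of_pos (by positivity)
  have hrH_pos : 0 < rH := hrH ▸ Real.rpow_pos_of_pos hμ _
  have hHP : rH < rP := by
    rw [hrH, hrP]
    exact Real.rpow_lt_rpow hμ.le (by nlinarith) (by positivity)
  have hcont (x y : ℝ) (hx : rH ≤ x) : ContinuousOn (effPotential μ C E (d - 3)) (Icc x y) :=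
    continuousOn_effPotential.mono fun r hr => hrH_pos.trans_le (hx.trans hr.1)
  have hVH : effPotential μ C E (d - 3) rH < 0 := by
    rwa [hrH, effPotential_horizon hμ ha.ne']
  obtain ⟨r₁, ⟨hHr₁, hr₁P⟩, hr₁⟩ :=
    intermediate_value_Ioo hHP.le (hcont rH rP le_rfl) ⟨hVH, hpos⟩
  obtain ⟨R, hR, hPR⟩ := ((tendsto_effPotential_atTop ha).eventually (Iio_mem_nhds hneg)).and
    (eventually_gt_atTop rP) |>.exists
  obtain ⟨r₂, ⟨hPr₂, -⟩, hr₂⟩ :=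
    intermediate_value_Ioo' hPR.le (hcont rP R hHP.le) ⟨hR, hpos⟩
  exact ⟨r₁, r₂, hHr₁, hr₁P, hPr₂, hr₁, hr₂⟩

/-- Fix an integer `d ≥ 4` and reals `μ > 0`, `C > 0`, `E` with `E ≠ 0`. If `V_eff(r_P) > 0`,
then there exist reals `r₁` and `r₂` with `r_H < r₁ < r_P < r₂` such that `V_eff(r₁) = 0`
and `V_eff(r₂) = 0`. -/
theorem exists_two_zeros_of_pos_max (d : ℕ) (hd : 4 ≤ d) (μ C E : ℝ)
    (hμ : 0 < μ) (hC : 0 < C) (hE : E ≠ 0)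
    (Veff : ℝ → ℝ)
    (hV : ∀ r : ℝ, Veff r = (C / r ^ 2) * (1 - μ * r ^ ((3 : ℝ) - d)) - E ^ 2)
    (rH : ℝ) (hrH : rH = μ ^ ((1 : ℝ) / ((d : ℝ) - 3)))
    (rP : ℝ) (hrP : rP = (μ * ((d : ℝ) - 1) / 2) ^ ((1 : ℝ) / ((d : ℝ) - 3)))
    (hpos : 0 < Veff rP) :
    ∃ r₁ r₂ : ℝ, rH < r₁ ∧ r₁ < rP ∧ rP < r₂ ∧ Veff r₁ = 0 ∧ Veff r₂ = 0 :=
  exists_two_zeros_of_pos_max_general d hd μ C E hμ hE Veff hV rH hrH rP hrP hpos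
end

section
/- Let f : ℝ → ℝ be differentiable and let g : ℝ → ℝ be continuous. Suppose (f′(s))² = g(f(s)) for every s ∈ ℝ, and suppose the range of f is bounded (above and below) and nonempty. Then g vanishes at the infimum of the range of f and at the supremum of the range of f: g(inf range f) = 0 and g(sup range f) = 0. -/
/-!
Suppose `g (sup f) > 0`. By continuity `g ≥ c > 0` on some band `(a, sup f]`, so `|f'| ≥ √c`
wherever `f > a`; in particular `f'` never vanishes there. Pick `s₀` with `f s₀ > a` and, after
reflecting time, `f' s₀ > 0`. By Darboux's theorem `f'` cannot change sign without vanishing, so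
`f` keeps increasing and stays above `a` on `[s₀, ∞)`, where it then grows at least linearly,
contradicting boundedness. The infimum is the supremum of `-f` for `y ↦ g (-y)`.
-/

open Set

section

variable {f : ℝ → ℝ} {a c s₀ : ℝ}

theorem forall_deriv_pos_of_forall_deriv_ne_zero (hf : Differentiable ℝ f) {D : Set ℝ}
    (hD : Convex ℝ D) (hs₀ : s₀ ∈ D) (h₀ : 0 < deriv f s₀) (hne : ∀ u ∈ D, deriv f u ≠ 0) :
    ∀ u ∈ D, 0 < deriv f u :=
  (hasDerivWithinAt_forall_lt_or_forall_gt_of_forall_ne hD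
    (fun u _ => (hf u).hasDerivAt.hasDerivWithinAt) hne).resolve_left
    fun hneg => (hneg s₀ hs₀).not_gt h₀

/-- At the first return to the level `a`, `f` would have been increasing since `s₀`. -/
theorem lt_apply_of_deriv_pos (hf : Differentiable ℝ f)
    (hne : ∀ s, a < f s → deriv f s ≠ 0) (hs₀ : a < f s₀) (h₀ : 0 < deriv f s₀) {t : ℝ}
    (ht : s₀ ≤ t) : a < f t := by
  by_contra! hft
  set K := {u ∈ Icc s₀ t | f u ≤ a}
  have hK : IsCompact K := isCompact_Icc.inter_right (isClosed_le hf.continuous continuous_const)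
  obtain ⟨⟨hs₀t₁, ht₁t⟩, hft₁⟩ : sInf K ∈ K := hK.sInf_mem ⟨t, ⟨ht, le_rfl⟩, hft⟩
  have hlt : s₀ < sInf K := hs₀t₁.lt_of_ne fun h => hs₀.not_ge (h ▸ hft₁)
  have habove : ∀ u ∈ Ico s₀ (sInf K), a < f u := fun u hu => by
    by_contra! h
    exact hu.2.not_ge (csInf_le hK.bddBelow ⟨⟨hu.1, hu.2.le.trans ht₁t⟩, h⟩)
  have hpos := forall_deriv_pos_of_forall_deriv_ne_zero hf (convex_Ico s₀ (sInf K))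
    (left_mem_Ico.2 hlt) h₀ fun u hu => hne u (habove u hu)
  have hmono : MonotoneOn f (Icc s₀ (sInf K)) :=
    monotoneOn_of_deriv_nonneg (convex_Icc _ _) hf.continuous.continuousOn hf.differentiableOn
      (by
        rw [interior_Icc]
        exact fun u hu => (hpos u (Ioo_subset_Ico_self hu)).le)
  exact hs₀.not_ge ((hmono (left_mem_Icc.2 hs₀t₁) (right_mem_Icc.2 hs₀t₁) hs₀t₁).trans hft₁)

theorem deriv_nonpos_of_le_sq_deriv (hf : Differentiable ℝ f) (hbdd : BddAbove (range f))
    (hc : 0 < c) (h : ∀ s, a < f s → c ≤ deriv f s ^ 2) (hs₀ : a < f s₀) : deriv f s₀ ≤ 0 := by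
  by_contra! h₀
  have hne : ∀ s, a < f s → deriv f s ≠ 0 := fun s hs h0 => by
    simpa [h0] using hc.trans_le (h s hs)
  have habove : ∀ t ∈ Ici s₀, a < f t := fun t ht => lt_apply_of_deriv_pos hf hne hs₀ h₀ ht
  have hpos := forall_deriv_pos_of_forall_deriv_ne_zero hf (convex_Ici s₀) self_mem_Ici h₀
    fun u hu => hne u (habove u hu)
  have hspeed : ∀ u ∈ Ici s₀, √c ≤ deriv f u := fun u hu =>
    calc √c ≤ √(deriv f u ^ 2) := Real.sqrt_le_sqrt (h u (habove u hu))
      _ = deriv f u := Real.sqrt_sq (hpos u hu).le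
  have hgrowth := (convex_Ici s₀).mul_sub_le_image_sub_of_le_deriv hf.continuous.continuousOn
    hf.differentiableOn fun u hu => hspeed u (interior_subset hu)
  obtain ⟨M, hM⟩ := hbdd
  have hsqrt : 0 < √c := Real.sqrt_pos.2 hc
  have hgap : 0 < M - f s₀ + 1 := by linarith [hM (mem_range_self s₀)]
  set t := s₀ + (M - f s₀ + 1) / √c
  have hst : s₀ ≤ t := le_add_of_nonneg_right (div_pos hgap hsqrt).le
  have hft := hgrowth s₀ self_mem_Ici t hst hst
  rw [add_sub_cancel_left, mul_div_cancel₀ _ hsqrt.ne'] at hft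
  linarith [hM (mem_range_self t)]

theorem forall_le_of_le_sq_deriv (hf : Differentiable ℝ f) (hbdd : BddAbove (range f))
    (hc : 0 < c) (h : ∀ s, a < f s → c ≤ deriv f s ^ 2) (s : ℝ) : f s ≤ a := by
  by_contra! hs
  have hle := deriv_nonpos_of_le_sq_deriv hf hbdd hc h hs
  have hge : -deriv f s ≤ 0 := by
    simpa [deriv_comp_neg] using deriv_nonpos_of_le_sq_deriv (f := fun t => f (-t)) (s₀ := -s)
      (hf.comp differentiable_neg) (hbdd.mono (range_comp_subset_range _ f)) hc
      (fun t ht => by simpa [deriv_comp_neg] using h (-t) ht) (by simpa using hs)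
  have := h s hs
  nlinarith

end

theorem apply_sSup_range_eq_zero {f g : ℝ → ℝ} (hf : Differentiable ℝ f) (hg : Continuous g)
    (hfg : ∀ s, deriv f s ^ 2 = g (f s)) (hne : (range f).Nonempty)
    (hbdd : BddAbove (range f)) : g (sSup (range f)) = 0 := by
  set M := sSup (range f)
  have hgM : 0 ≤ g M := closure_minimal (t := {y | 0 ≤ g y})
    (forall_mem_range.2 fun s => show 0 ≤ g (f s) from hfg s ▸ sq_nonneg _)
    (isClosed_le continuous_const hg) (csSup_mem_closure hne hbdd)
  refine (hgM.eq_or_lt.resolve_right fun hpos => ?_).symm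
  obtain ⟨l, u, ⟨hlM, hMu⟩, hlu⟩ :=
    mem_nhds_iff_exists_Ioo_subset.1 (hg.continuousAt.eventually (lt_mem_nhds (half_lt_self hpos)))
  have hbelow := forall_le_of_le_sq_deriv hf hbdd (half_pos hpos) (a := l) fun s hs =>
    (hfg s ▸ hlu ⟨hs, (le_csSup hbdd (mem_range_self s)).trans_lt hMu⟩ : g M / 2 < _).le
  exact hlM.not_ge (csSup_le hne (forall_mem_range.2 hbelow))

/-- Let `f : ℝ → ℝ` be differentiable and `g : ℝ → ℝ` continuous. Suppose
`(f′(s))² = g(f(s))` for every `s ∈ ℝ`, and the range of `f` is bounded (above and below)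
and nonempty. Then `g` vanishes at the infimum and at the supremum of the range of `f`. -/
theorem vanishes_at_endpoints_of_range (f g : ℝ → ℝ)
    (hf : Differentiable ℝ f) (hg : Continuous g)
    (hfg : ∀ s : ℝ, (deriv f s) ^ 2 = g (f s))
    (hne : (Set.range f).Nonempty)
    (hbdd_above : BddAbove (Set.range f)) (hbdd_below : BddBelow (Set.range f)) :
    g (sInf (Set.range f)) = 0 ∧ g (sSup (Set.range f)) = 0 := by
  refine ⟨?_, apply_sSup_range_eq_zero hf hg hfg hne hbdd_above⟩
  have hrange : -range f = range fun s => -f s := neg_range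
  have hneg := apply_sSup_range_eq_zero (f := fun s => -f s) (g := fun y => g (-y)) hf.neg
    (hg.comp continuous_neg) (fun s => by simpa using hfg s) (hrange ▸ hne.neg)
    (hrange ▸ bddAbove_neg.2 hbdd_below)
  rwa [← hrange, ← Real.sInf_def] at hneg
end

section
/- Fix an integer d ≥ 4 and reals μ > 0, C > 0, E. Let a, b be reals with μ^(1/(d−3)) < a ≤ b, and let r : ℝ → ℝ be a differentiable function with a ≤ r(s) ≤ b for all s ∈ ℝ, satisfying the radial null-geodesic equation r(s)⁴ · (r′(s))² = E² r(s)⁴ − C r(s)² (1 − μ r(s)^(3−d)) for all s ∈ ℝ. Then r is constant, and its constant value c satisfies E² c⁴ − C c² (1 − μ c^(3−d)) = 0. -/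
/-!
Dividing the radial equation by `r²` gives `r'² r² = h(r)` with `h(x) = R(x) / x²`, and `h` is
convex on `(0, ∞)`. If `r' s₀ ≠ 0` then `h (r s₀) > 0`, and by convexity `h ≥ h (r s₀)` on one
side of `x₀ = r s₀`, say on `(0, x₀]`. Then `|r'| ≥ δ > 0` whenever `r ≤ x₀`, so below `x₀` the
radius has no critical point at which to turn back: once it decreases there, it decreases at
speed at least `δ` forever, contradicting the lower bound `a`.
-/

open Set

/-- The paper's `R(x) / x²`; unlike `R`, it is convex on `(0, ∞)`. -/
noncomputable def reducedRadial (d : ℕ) (μ C E x : ℝ) : ℝ :=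
  E ^ 2 * x ^ 2 - C * (1 - μ * x ^ ((3 : ℝ) - d))

theorem convexOn_reducedRadial (d : ℕ) {μ C : ℝ} (hμ : 0 ≤ μ) (hC : 0 ≤ C) (E : ℝ) :
    ConvexOn ℝ (Ioi 0) (reducedRadial d μ C E) := by
  have hsq : ConvexOn ℝ (Ioi 0) fun x : ℝ => E ^ 2 • x ^ 2 :=
    ((convexOn_pow 2).subset Ioi_subset_Ici_self (convex_Ioi 0)).smul (sq_nonneg E)
  have hzpow : ConvexOn ℝ (Ioi 0) fun x : ℝ => (C * μ) • x ^ (3 - d : ℤ) :=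
    (convexOn_zpow _).smul (mul_nonneg hC hμ)
  refine ((hsq.add hzpow).add_const (-C)).congr fun x _ => ?_
  have hexp : ((3 : ℝ) - d) = ((3 - d : ℤ) : ℝ) := by push_cast; ring
  simp only [reducedRadial, Pi.add_apply, smul_eq_mul, hexp, Real.rpow_intCast]
  ring

theorem ConvexOn.isMinOn_Ici_or_isMinOn_Iic {𝕜 β : Type*} [Field 𝕜] [LinearOrder 𝕜]
    [IsStrictOrderedRing 𝕜] [AddCommMonoid β] [LinearOrder β] [IsOrderedAddMonoid β] [Module 𝕜 β]
    [PosSMulStrictMono 𝕜 β] {s : Set 𝕜} {f : 𝕜 → β} (hf : ConvexOn 𝕜 s f) (x : 𝕜) :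
    IsMinOn f (s ∩ Ici x) x ∨ IsMinOn f (s ∩ Iic x) x := by
  rw [isMinOn_iff, isMinOn_iff]
  by_contra! h
  obtain ⟨⟨z, ⟨hzs, hxz⟩, hz⟩, ⟨y, ⟨hys, hyx⟩, hy⟩⟩ := h
  have hseg : x ∈ segment 𝕜 y z := by rw [segment_eq_Icc (hyx.trans hxz)]; exact ⟨hyx, hxz⟩
  exact (hf.le_on_segment hys hzs hseg).not_gt (max_lt hy hz)

theorem le_of_deriv_neg_of_no_critical_point_below {φ : ℝ → ℝ} {a b : ℝ} (hab : a ≤ b)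
    (hφ : ContinuousOn φ (Icc a b)) (ha : deriv φ a < 0)
    (hcrit : ∀ x ∈ Ioo a b, φ x ≤ φ a → deriv φ x ≠ 0) : φ b ≤ φ a := by
  obtain ⟨c, hc, hmin⟩ := isCompact_Icc.exists_isMinOn (nonempty_Icc.2 hab) hφ
  rcases hc.2.eq_or_lt with rfl | hcb
  · exact hmin (left_mem_Icc.2 hab)
  rcases hc.1.eq_or_lt with rfl | hac
  · have hderiv : HasDerivWithinAt φ (deriv φ a) (Ici a) a :=
      (differentiableAt_of_deriv_ne_zero ha.ne).hasDerivAt.hasDerivWithinAt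
    obtain ⟨z, hz, hzb⟩ :=
      ((hderiv.liminf_right_slope_le ha).and_eventually (Ioo_mem_nhdsGT hcb)).exists
    rw [slope_def_field, div_neg_iff] at hz
    have hlt : φ z < φ a := by rcases hz with ⟨-, h⟩ | ⟨h, -⟩ <;> linarith [hzb.1]
    exact ((hmin ⟨hzb.1.le, hzb.2.le⟩).not_gt hlt).elim
  · exact (hcrit c ⟨hac, hcb⟩ (hmin (left_mem_Icc.2 hab))
      (hmin.isLocalMin (Icc_mem_nhds hac hcb)).deriv_eq_zero).elim

theorem sqrt_div_sq_le_abs_of_le_sq_mul_sq {c v x b : ℝ} (hx : 0 ≤ x) (hxb : x ≤ b)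
    (h : c ≤ v ^ 2 * x ^ 2) : √(c / b ^ 2) ≤ |v| := by
  rw [← Real.sqrt_sq_eq_abs]
  refine Real.sqrt_le_sqrt (div_le_of_le_mul₀ (sq_nonneg b) (sq_nonneg v) ?_)
  calc c ≤ v ^ 2 * x ^ 2 := h
    _ ≤ v ^ 2 * b ^ 2 := by gcongr

section Escape

variable {r : ℝ → ℝ} {m x₀ δ : ℝ}

theorem deriv_nonneg_of_abs_deriv_ge_on_sublevel (hr : Differentiable ℝ r) (hm : ∀ s, m ≤ r s)
    (hδ : 0 < δ) (hspeed : ∀ s, r s ≤ x₀ → δ ≤ |deriv r s|) {s₀ : ℝ} (hs₀ : r s₀ ≤ x₀) :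
    0 ≤ deriv r s₀ := by
  by_contra! hneg
  -- Tilting keeps `φ' < 0` at `s₀` and `φ' ≠ 0` where `r ≤ x₀`, while `φ ≤ φ s₀` forces `r ≤ x₀`.
  set φ : ℝ → ℝ := fun t => r t + δ / 2 * t
  have hφ' : ∀ t, deriv φ t = deriv r t + δ / 2 := fun t =>
    ((hr t).hasDerivAt.add ((hasDerivAt_id' t).const_mul (δ / 2))).deriv.trans (by rw [mul_one])
  have hdecay : ∀ t, s₀ ≤ t → φ t ≤ φ s₀ := by
    intro t hst
    refine le_of_deriv_neg_of_no_critical_point_below hst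
      (hr.continuous.add (continuous_const.mul continuous_id)).continuousOn ?_ ?_
    · have := hspeed s₀ hs₀
      rw [abs_of_neg hneg] at this
      rw [hφ']
      linarith
    · intro x hx hφx hcrit
      have hδx : 0 < δ / 2 * (x - s₀) := mul_pos (half_pos hδ) (sub_pos.2 hx.1)
      have := hspeed x (by simp only [φ] at hφx; nlinarith)
      rw [hφ'] at hcrit
      rw [show deriv r x = -(δ / 2) by linarith, abs_neg, abs_of_pos (half_pos hδ)] at this
      linarith
  set T := 2 * (x₀ - m + 1) / δ with hT_def
  have hT : δ / 2 * T = x₀ - m + 1 := by rw [hT_def]; field_simp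
  have := hdecay (s₀ + T) (le_add_of_nonneg_right (div_nonneg (by linarith [hm s₀]) hδ.le))
  simp only [φ, mul_add] at this
  linarith [hm (s₀ + T)]

theorem lt_of_abs_deriv_ge_on_sublevel (hr : Differentiable ℝ r) (hm : ∀ s, m ≤ r s)
    (hδ : 0 < δ) (hspeed : ∀ s, r s ≤ x₀ → δ ≤ |deriv r s|) (s : ℝ) : x₀ < r s := by
  by_contra! hs
  have hright := deriv_nonneg_of_abs_deriv_ge_on_sublevel hr hm hδ hspeed hs
  have hleft := deriv_nonneg_of_abs_deriv_ge_on_sublevel (r := fun t => r (-t)) (s₀ := -s)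
    (hr.comp differentiable_neg) (fun t => hm (-t)) hδ
    (fun t ht => by simpa only [deriv_comp_neg, abs_neg] using hspeed (-t) ht) (by simpa using hs)
  rw [deriv_comp_neg, neg_neg, neg_nonneg] at hleft
  have := hspeed s hs
  rw [le_antisymm hleft hright, abs_zero] at this
  linarith

end Escape

theorem trapped_photon_constant_radius_general (d : ℕ) (μ C E : ℝ)
    (hμ : 0 < μ) (hC : 0 < C)
    (a b : ℝ) (ha : μ ^ ((1 : ℝ) / ((d : ℝ) - 3)) < a)
    (r : ℝ → ℝ) (hr : Differentiable ℝ r)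
    (hbound : ∀ s : ℝ, a ≤ r s ∧ r s ≤ b)
    (hgeo : ∀ s : ℝ, (r s) ^ 4 * (deriv r s) ^ 2 =
      E ^ 2 * (r s) ^ 4 - C * (r s) ^ 2 * (1 - μ * (r s) ^ ((3 : ℝ) - d))) :
    ∃ c : ℝ, (∀ s : ℝ, r s = c) ∧
      E ^ 2 * c ^ 4 - C * c ^ 2 * (1 - μ * c ^ ((3 : ℝ) - d)) = 0 := by
  set h := reducedRadial d μ C E
  have hpos : ∀ s, 0 < r s := fun s =>
    ((Real.rpow_nonneg hμ.le _).trans_lt ha).trans_le (hbound s).1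
  have hfirst : ∀ s, deriv r s ^ 2 * r s ^ 2 = h (r s) := fun s => by
    refine mul_left_cancel₀ (pow_ne_zero 2 (hpos s).ne') ?_
    simp only [h, reducedRadial]
    linear_combination hgeo s
  by_cases hconst : ∀ s, deriv r s = 0
  · refine ⟨r 0, fun s => is_const_of_deriv_eq_zero hr hconst s 0, ?_⟩
    have := hgeo 0
    rw [hconst 0] at this
    linear_combination -this
  obtain ⟨s₀, hs₀⟩ := not_forall.1 hconst
  exfalso
  have hx₀ : 0 < h (r s₀) := by
    rw [← hfirst s₀]
    have := hpos s₀
    positivity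
  have hb : 0 < b ^ 2 := pow_pos ((hpos 0).trans_le (hbound 0).2) 2
  have hspeed : ∀ s, h (r s₀) ≤ h (r s) → √(h (r s₀) / b ^ 2) ≤ |deriv r s| := fun s hs =>
    sqrt_div_sq_le_abs_of_le_sq_mul_sq (hpos s).le (hbound s).2 (hs.trans (hfirst s).ge)
  have hδ : 0 < √(h (r s₀) / b ^ 2) := Real.sqrt_pos.2 (div_pos hx₀ hb)
  rcases (convexOn_reducedRadial d hμ.le hC.le E).isMinOn_Ici_or_isMinOn_Iic (r s₀)
    with hup | hdown
  · refine (lt_of_abs_deriv_ge_on_sublevel (r := -r) (x₀ := -r s₀) hr.neg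
      (fun s => neg_le_neg (hbound s).2) hδ (fun s hs => ?_) s₀).false
    rw [deriv.neg, abs_neg]
    exact hspeed s (hup ⟨hpos s, neg_le_neg_iff.1 hs⟩)
  · exact (lt_of_abs_deriv_ge_on_sublevel hr (fun s => (hbound s).1) hδ
      (fun s hs => hspeed s (hdown ⟨hpos s, hs⟩)) s₀).false

/-- Fix an integer `d ≥ 4` and reals `μ > 0`, `C > 0`, `E`. Let `a, b` be reals with
`μ^(1/(d−3)) < a ≤ b`, and let `r : ℝ → ℝ` be a differentiable function with
`a ≤ r(s) ≤ b` for all `s`, satisfying the radial null-geodesic equation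
`r(s)⁴ (r′(s))² = E² r(s)⁴ − C r(s)² (1 − μ r(s)^(3−d))` for all `s`. Then `r` is constant,
and its constant value `c` satisfies `E² c⁴ − C c² (1 − μ c^(3−d)) = 0`. -/
theorem trapped_photon_constant_radius (d : ℕ) (hd : 4 ≤ d) (μ C E : ℝ)
    (hμ : 0 < μ) (hC : 0 < C)
    (a b : ℝ) (ha : μ ^ ((1 : ℝ) / ((d : ℝ) - 3)) < a) (hab : a ≤ b)
    (r : ℝ → ℝ) (hr : Differentiable ℝ r)
    (hbound : ∀ s : ℝ, a ≤ r s ∧ r s ≤ b)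
    (hgeo : ∀ s : ℝ, (r s) ^ 4 * (deriv r s) ^ 2 =
      E ^ 2 * (r s) ^ 4 - C * (r s) ^ 2 * (1 - μ * (r s) ^ ((3 : ℝ) - d))) :
    ∃ c : ℝ, (∀ s : ℝ, r s = c) ∧
      E ^ 2 * c ^ 4 - C * c ^ 2 * (1 - μ * c ^ ((3 : ℝ) - d)) = 0 :=
  trapped_photon_constant_radius_general d μ C E hμ hC a b ha r hr hbound hgeo
end

section
/- Fix an integer d ≥ 4 and reals μ > 0, C > 0, E. Let a, b be reals with μ^(1/(d−3)) < a ≤ b, and let r : ℝ → ℝ be a twice differentiable function with a ≤ r(s) ≤ b for all s ∈ ℝ, satisfying for all s ∈ ℝ both the first-integral equation r(s)⁴ (r′(s))² = R(r(s)) and the second-order equation 2 r(s)⁴ r″(s) + 4 r(s)³ (r′(s))² = R′(r(s)), where R(r) := E² r⁴ − C (r² − μ r^(5−d)) and R′(r) := 4 E² r³ − C (2r − μ(5−d) r^(4−d)). Then r(s) = r_P := (μ(d−1)/2)^(1/(d−3)) for all s ∈ ℝ. -/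
open Set

/-!
Subtracting `4` times the first radial equation from `r` times the second eliminates `E`:
`2 r⁴ r'' = C (2 r − μ (d − 1) r^(4−d))`, whose right-hand side has the sign of `r − r_P`.
Hence `v = (r − r_P)²` has `v'' = 2 r'² + 2 (r − r_P) r'' ≥ 0`. A convex function that is bounded
above on `ℝ` is constant, so `v'' = 0`, which forces `r' = 0`, then `r'' = 0`, and finally the
radial equation pins `r` at the zero `r_P` of its right-hand side.
-/

theorem ConvexOn.hasDerivAt_eq_zero_of_bddAbove {f : ℝ → ℝ} {f' x : ℝ}
    (hf : ConvexOn ℝ univ f) (hbdd : BddAbove (range f)) (hx : HasDerivAt f f' x) : f' = 0 := by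
  obtain ⟨K, hK⟩ := hbdd
  have tangent : ∀ y, f x + f' * (y - x) ≤ f y := by
    intro y
    rcases lt_trichotomy x y with hxy | rfl | hyx
    · have := hf.le_slope_of_hasDerivAt (mem_univ x) (mem_univ y) hxy hx
      rw [slope_def_field, le_div_iff₀ (sub_pos.2 hxy)] at this
      linarith
    · simp
    · have := hf.slope_le_of_hasDerivAt (mem_univ y) (mem_univ x) hyx hx
      rw [slope_def_field, div_le_iff₀ (sub_pos.2 hyx)] at this
      linarith
  by_contra hf'
  -- the tangent line at `x` reaches `K + 1` at `y`
  set y := x + (K - f x + 1) / f'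
  have htangent := tangent y
  rw [add_sub_cancel_left, mul_div_cancel₀ _ hf'] at htangent
  linarith [hK (mem_range_self y)]

theorem deriv_eq_zero_of_sub_mul_deriv_deriv_nonneg {r : ℝ → ℝ} {p a b : ℝ}
    (hr : Differentiable ℝ r) (hr' : Differentiable ℝ (deriv r))
    (hbound : ∀ s, r s ∈ Icc a b) (hsign : ∀ s, 0 ≤ (r s - p) * deriv (deriv r) s) (s : ℝ) :
    deriv r s = 0 := by
  set v : ℝ → ℝ := fun t => (r t - p) ^ 2
  set v' : ℝ → ℝ := fun t => 2 * (r t - p) * deriv r t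
  have hv : ∀ t, HasDerivAt v (v' t) t := fun t => by
    simpa [v, v'] using ((hr t).hasDerivAt.sub_const p).fun_pow 2
  have hv' : ∀ t, HasDerivAt v' (2 * deriv r t ^ 2 + 2 * (r t - p) * deriv (deriv r) t) t :=
    fun t =>
      ((((hr t).hasDerivAt.sub_const p).const_mul 2).fun_mul (hr' t).hasDerivAt).congr_deriv
        (by ring)
  have hconvex : ConvexOn ℝ univ v := by
    refine convexOn_of_hasDerivWithinAt2_nonneg convex_univ
      (fun t _ => (hv t).continuousAt.continuousWithinAt) (fun t _ => (hv t).hasDerivWithinAt)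
      (fun t _ => (hv' t).hasDerivWithinAt) fun t _ => ?_
    nlinarith [hsign t, sq_nonneg (deriv r t)]
  have hbdd : BddAbove (range v) := by
    refine ⟨(a - p) ^ 2 + (b - p) ^ 2, forall_mem_range.2 fun t => ?_⟩
    obtain ⟨hat, htb⟩ := hbound t
    nlinarith [mul_nonneg (sub_nonneg.2 hat) (sub_nonneg.2 htb), sq_nonneg (a + b - r t - p)]
  have hv'_zero : v' = 0 := funext fun t => hconvex.hasDerivAt_eq_zero_of_bddAbove hbdd (hv t)
  have hv''_zero : 2 * deriv r s ^ 2 + 2 * (r s - p) * deriv (deriv r) s = 0 := by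
    have := hv' s
    rw [hv'_zero] at this
    exact this.unique (hasDerivAt_const s 0)
  nlinarith [hsign s, sq_nonneg (deriv r s)]

section PhotonSphere

variable {μ d x : ℝ}

noncomputable def photonSphereRadius (μ d : ℝ) : ℝ := (μ * (d - 1) / 2) ^ (1 / (d - 3))

/-- `-x⁴ V'(x)` for the effective potential `V(x) = (1 - μ x^(3-d)) / x²` of null geodesics. -/
noncomputable def radialForce (μ d x : ℝ) : ℝ := 2 * x - μ * (d - 1) * x ^ (4 - d)

theorem photonSphereRadius_rpow (hμ : 0 ≤ μ) (hd : 3 < d) :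
    photonSphereRadius μ d ^ (d - 3) = μ * (d - 1) / 2 := by
  rw [photonSphereRadius, one_div, Real.rpow_inv_rpow (by nlinarith) (by linarith)]

theorem radialForce_eq (hμ : 0 ≤ μ) (hd : 3 < d) (hx : 0 < x) :
    radialForce μ d x = 2 * x ^ (4 - d) * (x ^ (d - 3) - photonSphereRadius μ d ^ (d - 3)) := by
  have hsplit : x ^ (4 - d) * x ^ (d - 3) = x := by
    rw [← Real.rpow_add hx, show 4 - d + (d - 3) = 1 by ring, Real.rpow_one]
  rw [radialForce, photonSphereRadius_rpow hμ hd]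
  linear_combination -2 * hsplit

theorem sub_photonSphereRadius_mul_radialForce_nonneg (hμ : 0 ≤ μ) (hd : 3 < d) (hx : 0 < x) :
    0 ≤ (x - photonSphereRadius μ d) * radialForce μ d x := by
  have hp : 0 ≤ photonSphereRadius μ d := Real.rpow_nonneg (by nlinarith) _
  have hmono : MonotoneOn (· ^ (d - 3)) (Ici (0 : ℝ)) :=
    Real.monotoneOn_rpow_Ici_of_exponent_nonneg (by linarith)
  have hmonovary : 0 ≤ (x ^ (d - 3) - photonSphereRadius μ d ^ (d - 3)) *
      (x - photonSphereRadius μ d) :=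
    (hmono.monovaryOn monotoneOn_id).sub_mul_sub_nonneg (mem_Ici.2 hp) (mem_Ici.2 hx.le)
  rw [radialForce_eq hμ hd hx, mul_left_comm, mul_comm (x - _)]
  exact mul_nonneg (by positivity) hmonovary

theorem eq_photonSphereRadius_of_radialForce_eq_zero (hμ : 0 ≤ μ) (hd : 3 < d) (hx : 0 < x)
    (h : radialForce μ d x = 0) : x = photonSphereRadius μ d := by
  rw [radialForce_eq hμ hd hx, mul_eq_zero, sub_eq_zero] at h
  rcases h with h | h
  · exact absurd h (by positivity)
  · exact (Real.rpow_left_inj hx.le (Real.rpow_nonneg (by nlinarith) _) (by linarith)).1 h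

theorem two_mul_pow_four_mul_eq_radialForce {y z E C : ℝ} (hx : 0 < x)
    (hfirst : x ^ 4 * y ^ 2 = E ^ 2 * x ^ 4 - C * (x ^ 2 - μ * x ^ (5 - d)))
    (hsecond : 2 * x ^ 4 * z + 4 * x ^ 3 * y ^ 2 =
      4 * E ^ 2 * x ^ 3 - C * (2 * x - μ * (5 - d) * x ^ (4 - d))) :
    2 * x ^ 4 * z = C * radialForce μ d x := by
  have hsplit : x ^ (5 - d) = x ^ (4 - d) * x := by
    rw [show 5 - d = 4 - d + 1 by ring, Real.rpow_add hx, Real.rpow_one]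
  rw [hsplit] at hfirst
  refine mul_left_cancel₀ hx.ne' ?_
  rw [radialForce]
  linear_combination x * hsecond - 4 * hfirst

end PhotonSphere

theorem trapped_photon_on_photon_sphere_general (d : ℕ) (hd : 4 ≤ d) (μ C E : ℝ)
    (hμ : 0 < μ) (hC : 0 < C)
    (a b : ℝ) (ha : μ ^ ((1 : ℝ) / ((d : ℝ) - 3)) < a)
    (r : ℝ → ℝ) (hr : Differentiable ℝ r) (hr' : Differentiable ℝ (deriv r))
    (hbound : ∀ s : ℝ, a ≤ r s ∧ r s ≤ b)
    (hgeo1 : ∀ s : ℝ, (r s) ^ 4 * (deriv r s) ^ 2 =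
      E ^ 2 * (r s) ^ 4 - C * ((r s) ^ 2 - μ * (r s) ^ ((5 : ℝ) - d)))
    (hgeo2 : ∀ s : ℝ, 2 * (r s) ^ 4 * deriv (deriv r) s + 4 * (r s) ^ 3 * (deriv r s) ^ 2 =
      4 * E ^ 2 * (r s) ^ 3 - C * (2 * r s - μ * ((5 : ℝ) - d) * (r s) ^ ((4 : ℝ) - d))) :
    ∀ s : ℝ, r s = (μ * ((d : ℝ) - 1) / 2) ^ ((1 : ℝ) / ((d : ℝ) - 3)) := by
  have hd3 : (3 : ℝ) < d := by exact_mod_cast hd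
  have hrpos : ∀ s, 0 < r s := fun s =>
    (Real.rpow_pos_of_pos hμ _).trans (ha.trans_le (hbound s).1)
  have haccel : ∀ s, 2 * r s ^ 4 * deriv (deriv r) s = C * radialForce μ d (r s) := fun s =>
    two_mul_pow_four_mul_eq_radialForce (hrpos s) (hgeo1 s) (hgeo2 s)
  have hsign : ∀ s, 0 ≤ (r s - photonSphereRadius μ d) * deriv (deriv r) s := fun s => by
    have hscaled : 2 * r s ^ 4 * ((r s - photonSphereRadius μ d) * deriv (deriv r) s) =
        C * ((r s - photonSphereRadius μ d) * radialForce μ d (r s)) := by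
      linear_combination (r s - photonSphereRadius μ d) * haccel s
    have hpos : 0 < 2 * r s ^ 4 := by have := hrpos s; positivity
    exact nonneg_of_mul_nonneg_right (hscaled ▸ mul_nonneg hC.le
      (sub_photonSphereRadius_mul_radialForce_nonneg hμ.le hd3 (hrpos s))) hpos
  have hr'_zero : deriv r = 0 :=
    funext (deriv_eq_zero_of_sub_mul_deriv_deriv_nonneg hr hr' hbound hsign)
  intro s
  refine eq_photonSphereRadius_of_radialForce_eq_zero hμ.le hd3 (hrpos s) ?_
  simpa [hr'_zero, hC.ne'] using (haccel s).symm

/-- Fix an integer `d ≥ 4` and reals `μ > 0`, `C > 0`, `E`. Let `a, b` be reals with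
`μ^(1/(d−3)) < a ≤ b`, and let `r : ℝ → ℝ` be twice differentiable with `a ≤ r(s) ≤ b`
for all `s`, satisfying the first-integral equation `r(s)⁴ (r′(s))² = R(r(s))` and the
second-order equation `2 r(s)⁴ r″(s) + 4 r(s)³ (r′(s))² = R′(r(s))` for all `s`, where
`R(r) = E² r⁴ − C (r² − μ r^(5−d))` and `R′(r) = 4 E² r³ − C (2r − μ(5−d) r^(4−d))`.
Then `r(s) = r_P = (μ(d−1)/2)^(1/(d−3))` for all `s`. -/
theorem trapped_photon_on_photon_sphere (d : ℕ) (hd : 4 ≤ d) (μ C E : ℝ)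
    (hμ : 0 < μ) (hC : 0 < C)
    (a b : ℝ) (ha : μ ^ ((1 : ℝ) / ((d : ℝ) - 3)) < a) (hab : a ≤ b)
    (r : ℝ → ℝ) (hr : Differentiable ℝ r) (hr' : Differentiable ℝ (deriv r))
    (hbound : ∀ s : ℝ, a ≤ r s ∧ r s ≤ b)
    (hgeo1 : ∀ s : ℝ, (r s) ^ 4 * (deriv r s) ^ 2 =
      E ^ 2 * (r s) ^ 4 - C * ((r s) ^ 2 - μ * (r s) ^ ((5 : ℝ) - d)))
    (hgeo2 : ∀ s : ℝ, 2 * (r s) ^ 4 * deriv (deriv r) s + 4 * (r s) ^ 3 * (deriv r s) ^ 2 =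
      4 * E ^ 2 * (r s) ^ 3 - C * (2 * r s - μ * ((5 : ℝ) - d) * (r s) ^ ((4 : ℝ) - d))) :
    ∀ s : ℝ, r s = (μ * ((d : ℝ) - 1) / 2) ^ ((1 : ℝ) / ((d : ℝ) - 3)) :=
  trapped_photon_on_photon_sphere_general d hd μ C E hμ hC a b ha r hr hr' hbound hgeo1 hgeo2
end

section
/- Fix an integer d ≥ 4 and reals μ > 0, C > 0, E. If V_eff(r_P) < 0, where V_eff(r) := (C/r²)(1 − μ r^(3−d)) − E² and r_P := (μ(d−1)/2)^(1/(d−3)), then V_eff(r) < 0 for every r > 0; equivalently, R(r) := −r⁴ V_eff(r) is strictly positive for every r > 0. -/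
/-!
With `d = k + 3`, `V_eff(r) + E² = C (r^k - μ) / r^(k+2)` and `r_P^k = μ (k+2) / 2`. Substituting
`r = x r_P`, the inequality `V_eff(r) ≤ V_eff(r_P)` becomes `(k+2) x^k ≤ k x^(k+2) + 2`, which is
weighted AM-GM for `x^(k+2)` and `1`. So `r_P` is a global maximum of `V_eff` on `(0, ∞)`.
-/

lemma add_mul_pow_le_mul_pow_add_add (a b : ℕ) {x : ℝ} (hx : 0 ≤ x) :
    ((a : ℝ) + b) * x ^ a ≤ a * x ^ (a + b) + b := by
  rcases Nat.eq_zero_or_pos (a + b) with hab | hab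
  · obtain ⟨rfl, rfl⟩ : a = 0 ∧ b = 0 := by omega
    simp
  have hab' : (0 : ℝ) < a + b := by exact_mod_cast hab
  have amgm := Real.geom_mean_le_arith_mean2_weighted (p₁ := x ^ (a + b)) (p₂ := 1)
    (w₁ := a / (a + b)) (w₂ := b / (a + b)) (by positivity) (by positivity) (by positivity)
    zero_le_one (by field_simp)
  have hpow : (x ^ (a + b)) ^ ((a : ℝ) / (a + b)) = x ^ a := by
    rw [← Real.rpow_natCast, ← Real.rpow_mul hx, ← Real.rpow_natCast]
    congr 1
    push_cast
    field_simp
  rw [hpow, Real.one_rpow, mul_one] at amgm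
  have := mul_le_mul_of_nonneg_left amgm hab'.le
  field_simp at this
  linarith

lemma pow_sub_div_pow_add_two_le (k : ℕ) {μ rP r : ℝ} (hrP : 0 < rP) (hr : 0 < r)
    (hμ : ((k : ℝ) + 2) * μ = 2 * rP ^ k) :
    (r ^ k - μ) / r ^ (k + 2) ≤ (rP ^ k - μ) / rP ^ (k + 2) := by
  obtain ⟨x, hx, rfl⟩ : ∃ x, 0 < x ∧ r = x * rP := ⟨r / rP, by positivity, by field_simp⟩
  have amgm := add_mul_pow_le_mul_pow_add_add k 2 hx.le
  rw [div_le_div_iff₀ (by positivity) (by positivity)]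
  have hμ' : μ = 2 * rP ^ k / (k + 2) := by field_simp; linarith
  subst hμ'
  have gap : 0 ≤ (k * x ^ (k + 2) + 2 - (k + 2) * x ^ k) * rP ^ (2 * k + 2) / (k + 2) := by
    have : 0 ≤ k * x ^ (k + 2) + 2 - (k + 2) * x ^ k := by push_cast at amgm; linarith
    positivity
  have gap_eq : (rP ^ k - 2 * rP ^ k / (k + 2)) * (x * rP) ^ (k + 2)
      - ((x * rP) ^ k - 2 * rP ^ k / (k + 2)) * rP ^ (k + 2)
      = (k * x ^ (k + 2) + 2 - (k + 2) * x ^ k) * rP ^ (2 * k + 2) / (k + 2) := by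
    rw [mul_pow, mul_pow]
    field_simp
    ring
  linarith

lemma photonSphere_radius_pow (k : ℕ) (hk : k ≠ 0) {μ : ℝ} (hμ : 0 ≤ μ) :
    ((μ * ((k + 3 : ℕ) - 1) / 2) ^ ((1 : ℝ) / ((k + 3 : ℕ) - 3))) ^ k = μ * (k + 2) / 2 := by
  push_cast
  rw [show (k : ℝ) + 3 - 3 = k by ring, show (k : ℝ) + 3 - 1 = k + 2 by ring, one_div]
  exact Real.rpow_inv_natCast_pow (by positivity) hk

lemma effective_potential_eq (k : ℕ) (μ C : ℝ) {r : ℝ} (hr : 0 < r) :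
    (C / r ^ 2) * (1 - μ * r ^ ((3 : ℝ) - (k + 3 : ℕ))) = C * ((r ^ k - μ) / r ^ (k + 2)) := by
  rw [show (3 : ℝ) - (k + 3 : ℕ) = -k by push_cast; ring, Real.rpow_neg hr.le,
    Real.rpow_natCast]
  field_simp
  ring

/-- Fix an integer `d ≥ 4` and reals `μ > 0`, `C > 0`, `E`. If `V_eff(r_P) < 0`, then
`V_eff(r) < 0` for every `r > 0`; equivalently, `R(r) = −r⁴ V_eff(r)` is strictly positive
for every `r > 0`. -/
theorem effective_potential_neg_everywhere (d : ℕ) (hd : 4 ≤ d) (μ C E : ℝ)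
    (hμ : 0 < μ) (hC : 0 < C)
    (Veff : ℝ → ℝ)
    (hV : ∀ r : ℝ, Veff r = (C / r ^ 2) * (1 - μ * r ^ ((3 : ℝ) - d)) - E ^ 2)
    (rP : ℝ) (hrP : rP = (μ * ((d : ℝ) - 1) / 2) ^ ((1 : ℝ) / ((d : ℝ) - 3)))
    (hneg : Veff rP < 0) :
    ∀ r : ℝ, 0 < r → Veff r < 0 ∧ 0 < -(r ^ 4 * Veff r) := by
  obtain ⟨k, rfl⟩ : ∃ k, d = k + 3 := ⟨d - 3, by omega⟩
  have hrP_pos : 0 < rP := hrP ▸ Real.rpow_pos_of_pos (by push_cast; ring_nf; positivity) _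
  have hrP_pow : ((k : ℝ) + 2) * μ = 2 * rP ^ k := by
    rw [hrP, photonSphere_radius_pow k (by omega) hμ.le]
    ring
  intro r hr
  have hle : Veff r ≤ Veff rP := by
    rw [hV, hV, effective_potential_eq k μ C hr, effective_potential_eq k μ C hrP_pos]
    gcongr C * ?_ - _
    exact pow_sub_div_pow_add_two_le k hrP_pos hr hrP_pow
  have hlt : Veff r < 0 := hle.trans_lt hneg
  exact ⟨hlt, neg_pos.2 (mul_neg_of_pos_of_neg (by positivity) hlt)⟩
end
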